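/- Let (S_G, M_G) be a quantum graph on M_n(ℂ) and (S_H, M_H) a quantum graph on M_m(ℂ). Set M_K = M_G ⊗ M_H (the unital star-subalgebra of M_{nm}(ℂ) spanned by Kronecker products of elements of M_G and M_H) and S_K = S_G ⊗ M_H' + M_G' ⊗ S_H + S_G ⊗ S_H (strong product). Then (S_K, M_K) is a quantum graph on M_{nm}(ℂ): S_K is a ℂ-linear subspace closed under conjugate transpose, A X B ∈ S_K for all A, B in the commutant M_K' of M_K in M_{nm}(ℂ) and all X ∈ S_K, and Tr(X Aᴴ) = 0 for all X ∈ S_K and A ∈ M_K'. -/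

import Mathlib

open Matrix Kronecker BigOperators

noncomputable section

/-- The commutant of a set of matrices in `M_I(ℂ)`. -/
def commutant {I : Type*} [Fintype I] (M : Set (Matrix I I ℂ)) : Set (Matrix I I ℂ) :=
  {Y | ∀ A ∈ M, Y * A = A * Y}

/-- The ℂ-linear span of Kronecker products `v ⊗ₖ w` with `v ∈ V`, `w ∈ W`. -/
def tensorSpan {I J : Type*} [Fintype I] [Fintype J]
    (V : Set (Matrix I I ℂ)) (W : Set (Matrix J J ℂ)) :
    Submodule ℂ (Matrix (I × J) (I × J) ℂ) :=
  Submodule.span ℂ {x | ∃ v ∈ V, ∃ w ∈ W, x = v ⊗ₖ w}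

/-- A pair `(S, M)` is a quantum graph: `S` is closed under conjugate transpose, is a
bimodule over the commutant of `M`, and is trace-orthogonal to the commutant of `M`. -/
def IsQuantumGraph {I : Type*} [Fintype I]
    (S : Submodule ℂ (Matrix I I ℂ)) (M : Set (Matrix I I ℂ)) : Prop :=
  (∀ X ∈ S, Xᴴ ∈ S) ∧
  (∀ A ∈ commutant M, ∀ B ∈ commutant M, ∀ X ∈ S, A * X * B ∈ S) ∧
  (∀ X ∈ S, ∀ A ∈ commutant M, Matrix.trace (X * Aᴴ) = 0)

/-- Product of the matrices `P a`, `a ∈ T`, taken in increasing order of indices. -/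
def finsetProd {β : Type*} [Monoid β] {c : ℕ} (P : Fin c → β) (T : Finset (Fin c)) : β :=
  ((T.sort (· ≤ ·)).map P).prod

/-- A quantum `c`-coloring of `(S, M)` (with auxiliary algebra `M_k(ℂ)`). -/
def IsQColoring {I : Type*} [Fintype I] [DecidableEq I] {c k : ℕ}
    (S : Submodule ℂ (Matrix I I ℂ)) (M : Set (Matrix I I ℂ))
    (P : Fin c → Matrix (I × Fin k) (I × Fin k) ℂ) : Prop :=
  (∀ a, P a ∈ tensorSpan M (Set.univ : Set (Matrix (Fin k) (Fin k) ℂ))) ∧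
  (∀ a, (P a)ᴴ = P a) ∧
  (∀ a, P a * P a = P a) ∧
  ((∑ a, P a) = 1) ∧
  (∀ X ∈ S, ∀ a, P a * (X ⊗ₖ (1 : Matrix (Fin k) (Fin k) ℂ)) * P a = 0)

def HasQColoring {I : Type*} [Fintype I] [DecidableEq I]
    (S : Submodule ℂ (Matrix I I ℂ)) (M : Set (Matrix I I ℂ)) (c : ℕ) : Prop :=
  ∃ k : ℕ, 1 ≤ k ∧ ∃ P : Fin c → Matrix (I × Fin k) (I × Fin k) ℂ, IsQColoring S M P

/-- The quantum chromatic number `χ_q(S, M) ∈ ℕ∞`. -/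
def qChrom {I : Type*} [Fintype I] [DecidableEq I]
    (S : Submodule ℂ (Matrix I I ℂ)) (M : Set (Matrix I I ℂ)) : ℕ∞ :=
  ⨅ (c : ℕ) (_ : HasQColoring S M c), (c : ℕ∞)

/-- A quantum `b`-fold coloring of `(S, M)` using `c` colors
(with auxiliary algebra `M_k(ℂ)`). -/
def IsQBFoldColoring {I : Type*} [Fintype I] [DecidableEq I] {c k : ℕ}
    (S : Submodule ℂ (Matrix I I ℂ)) (M : Set (Matrix I I ℂ)) (b : ℕ)
    (P : Fin c → Matrix (I × Fin k) (I × Fin k) ℂ) : Prop :=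
  (∀ a, P a ∈ tensorSpan M (Set.univ : Set (Matrix (Fin k) (Fin k) ℂ))) ∧
  (∀ a a', P a * P a' = P a' * P a) ∧
  (∀ a, (P a)ᴴ = P a) ∧
  (∀ a, P a * P a = P a) ∧
  ((∑ T ∈ Finset.univ.powersetCard b, finsetProd P T) = 1) ∧
  (∀ X ∈ S, ∀ a, P a * (X ⊗ₖ (1 : Matrix (Fin k) (Fin k) ℂ)) * P a = 0)

def HasQBFoldColoring {I : Type*} [Fintype I] [DecidableEq I]
    (S : Submodule ℂ (Matrix I I ℂ)) (M : Set (Matrix I I ℂ)) (b c : ℕ) : Prop :=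
  ∃ k : ℕ, 1 ≤ k ∧ ∃ P : Fin c → Matrix (I × Fin k) (I × Fin k) ℂ, IsQBFoldColoring S M b P

/-- The quantum `b`-fold chromatic number `χ_{b,q}(S, M) ∈ ℕ∞`. -/
def qbChrom {I : Type*} [Fintype I] [DecidableEq I]
    (S : Submodule ℂ (Matrix I I ℂ)) (M : Set (Matrix I I ℂ)) (b : ℕ) : ℕ∞ :=
  ⨅ (c : ℕ) (_ : HasQBFoldColoring S M b c), (c : ℕ∞)

/-- A local `b`-fold coloring of `(S, M)` using `c` colors (projections in `M` itself). -/
def IsLocalBFoldColoring {I : Type*} [Fintype I] [DecidableEq I] {c : ℕ}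
    (S : Submodule ℂ (Matrix I I ℂ)) (M : Set (Matrix I I ℂ)) (b : ℕ)
    (P : Fin c → Matrix I I ℂ) : Prop :=
  (∀ a, P a ∈ M) ∧
  (∀ a a', P a * P a' = P a' * P a) ∧
  (∀ a, (P a)ᴴ = P a) ∧
  (∀ a, P a * P a = P a) ∧
  ((∑ T ∈ Finset.univ.powersetCard b, finsetProd P T) = 1) ∧
  (∀ X ∈ S, ∀ a, P a * X * P a = 0)

def HasLocalBFoldColoring {I : Type*} [Fintype I] [DecidableEq I]
    (S : Submodule ℂ (Matrix I I ℂ)) (M : Set (Matrix I I ℂ)) (b c : ℕ) : Prop :=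
  ∃ P : Fin c → Matrix I I ℂ, IsLocalBFoldColoring S M b P

/-- The local `b`-fold chromatic number. -/
def localBChrom {I : Type*} [Fintype I] [DecidableEq I]
    (S : Submodule ℂ (Matrix I I ℂ)) (M : Set (Matrix I I ℂ)) (b : ℕ) : ℕ∞ :=
  ⨅ (c : ℕ) (_ : HasLocalBFoldColoring S M b c), (c : ℕ∞)

/-- `S_G`: span of matrix units on edges of a simple graph. -/
def graphSpan {V : Type*} [Fintype V] [DecidableEq V] (G : SimpleGraph V) :
    Submodule ℂ (Matrix V V ℂ) :=
  Submodule.span ℂ {x | ∃ v w, G.Adj v w ∧ x = Matrix.single v w 1}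

/-- The partial trace over the first tensor factor. -/
def ptrace {I J : Type*} [Fintype I] (P : Matrix (I × J) (I × J) ℂ) : Matrix J J ℂ :=
  Matrix.of fun p q => ∑ i, P (i, p) (i, q)

/-- The complete quantum graph operator space: everything trace-orthogonal to `M'`. -/
def completeS {I : Type*} [Fintype I] (M : Set (Matrix I I ℂ)) :
    Submodule ℂ (Matrix I I ℂ) where
  carrier := {X | ∀ A ∈ commutant M, Matrix.trace (X * Aᴴ) = 0}
  add_mem' := by
    intro x y hx hy A hA
    rw [Set.mem_setOf_eq] at *
    rw [Matrix.add_mul, Matrix.trace_add, hx A hA, hy A hA, add_zero]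
  zero_mem' := by
    intro A hA
    rw [Matrix.zero_mul, Matrix.trace_zero]
  smul_mem' := by
    intro r x hx A hA
    rw [Set.mem_setOf_eq] at *
    rw [Matrix.smul_mul, Matrix.trace_smul, hx A hA, smul_zero]

/-!
A matrix `Y` commuting with every `1 ⊗ B` and `A ⊗ 1` (`A ∈ M_G`, `B ∈ M_H`) has its blocks
`(Y_{(i,p),(j,q)})_{p,q}` in `M_H'` and its blocks `(Y_{(i,b),(j,d)})_{i,j}` in `M_G'`; applying
projections onto `M_G'` and `M_H'` in the two tensor legs then fixes `Y`, so
`(M_G ⊗ M_H)' = M_G' ⊗ M_H'`. Each summand `V ⊗ W` of `S_K` is therefore self-adjoint and a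
bimodule over `(M_G ⊗ M_H)'`, as `(a ⊗ a')(v ⊗ w)(b ⊗ b') = avb ⊗ a'wb'`, and it is
trace-orthogonal to it because `Tr((v ⊗ w)(a ⊗ b)ᴴ) = Tr(v aᴴ) Tr(w bᴴ)` and one factor vanishes.
Finally, quantum graphs over a fixed `M` are closed under sums.
-/

theorem Submodule.exists_isProj {K V : Type*} [DivisionRing K] [AddCommGroup V] [Module K V]
    (p : Submodule K V) : ∃ f : V →ₗ[K] V, LinearMap.IsProj p f := by
  obtain ⟨q, hq⟩ := p.exists_isCompl
  exact ⟨p.subtype ∘ₗ p.projectionOnto q hq, fun x => (p.projectionOnto q hq x).2,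
    fun x hx => congrArg Subtype.val (Submodule.projectionOnto_apply_left hq ⟨x, hx⟩)⟩

theorem LinearMap.map_matrix_apply_eq_sum_single {R m n k l : Type*} [CommSemiring R]
    [Fintype m] [Fintype n] [DecidableEq m] [DecidableEq n] (f : Matrix m n R →ₗ[R] Matrix k l R)
    (Z : Matrix m n R) (a : k) (c : l) :
    f Z a c = ∑ i, ∑ j, Z i j * f (Matrix.single i j 1) a c := by
  have hsingle : ∀ i j, Matrix.single i j (Z i j) = Z i j • Matrix.single i j 1 := by
    simp [Matrix.smul_single]
  conv_lhs => rw [Z.matrix_eq_sum_single]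
  simp only [hsingle, map_sum, map_smul, Matrix.sum_apply, Matrix.smul_apply, smul_eq_mul]

section
variable {I J : Type*} [Fintype I] [Fintype J]

theorem commutant_eq_centralizer (M : Set (Matrix I I ℂ)) : commutant M = M.centralizer := by
  ext Y
  simp [commutant, Set.mem_centralizer_iff, eq_comm]

theorem mem_tensorSpan_of_submatrix_mem {V : Submodule ℂ (Matrix I I ℂ)}
    {W : Submodule ℂ (Matrix J J ℂ)} {Y : Matrix (I × J) (I × J) ℂ}
    (hV : ∀ b d, Y.submatrix (·, b) (·, d) ∈ V)
    (hW : ∀ i j, Y.submatrix (Prod.mk i) (Prod.mk j) ∈ W) : Y ∈ tensorSpan V W := by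
  classical
  obtain ⟨f, hf⟩ := V.exists_isProj
  obtain ⟨g, hg⟩ := W.exists_isProj
  -- `Y = (f ⊗ g) Y`, written out in matrix units
  have hY : Y = ∑ i, ∑ j, ∑ p, ∑ q,
      Y (i, p) (j, q) • (f (Matrix.single i j 1) ⊗ₖ g (Matrix.single p q 1)) := by
    ext ⟨a, b⟩ ⟨c, d⟩
    calc Y (a, b) (c, d) = f (Y.submatrix (·, b) (·, d)) a c := by
          rw [hf.map_id _ (hV b d)]; rfl
      _ = ∑ i, ∑ j, g (Y.submatrix (Prod.mk i) (Prod.mk j)) b d * f (Matrix.single i j 1) a c := by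
        rw [f.map_matrix_apply_eq_sum_single]
        simp only [hg.map_id _ (hW _ _)]
        rfl
      _ = _ := by
        simp only [g.map_matrix_apply_eq_sum_single (Y.submatrix _ _), Matrix.sum_apply,
          Matrix.smul_apply, Finset.sum_mul]
        simp only [Matrix.submatrix_apply, Matrix.kroneckerMap_apply, smul_eq_mul, ← mul_assoc,
          mul_right_comm _ (g _ b d)]
  rw [hY]
  exact Submodule.sum_mem _ fun i _ => Submodule.sum_mem _ fun j _ =>
    Submodule.sum_mem _ fun p _ => Submodule.sum_mem _ fun q _ =>
    Submodule.smul_mem _ _ (Submodule.subset_span ⟨_, hf.map_mem _, _, hg.map_mem _, rfl⟩)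

theorem submatrix_mul_kronecker_one [DecidableEq J] (Y : Matrix (I × J) (I × J) ℂ)
    (A : Matrix I I ℂ) (b d : J) :
    (Y * (A ⊗ₖ 1)).submatrix (·, b) (·, d) = Y.submatrix (·, b) (·, d) * A := by
  ext p q
  simp [Matrix.mul_apply, Fintype.sum_prod_type, Matrix.one_apply]

theorem submatrix_kronecker_one_mul [DecidableEq J] (Y : Matrix (I × J) (I × J) ℂ)
    (A : Matrix I I ℂ) (b d : J) :
    ((A ⊗ₖ 1) * Y).submatrix (·, b) (·, d) = A * Y.submatrix (·, b) (·, d) := by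
  ext p q
  simp [Matrix.mul_apply, Fintype.sum_prod_type, Matrix.one_apply]

theorem submatrix_prodMk_mul_one_kronecker [DecidableEq I] (Y : Matrix (I × J) (I × J) ℂ)
    (B : Matrix J J ℂ) (i j : I) :
    (Y * (1 ⊗ₖ B)).submatrix (Prod.mk i) (Prod.mk j) = Y.submatrix (Prod.mk i) (Prod.mk j) * B := by
  ext p q
  simp [Matrix.mul_apply, Fintype.sum_prod_type, Matrix.one_apply]

theorem submatrix_prodMk_one_kronecker_mul [DecidableEq I] (Y : Matrix (I × J) (I × J) ℂ)
    (B : Matrix J J ℂ) (i j : I) :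
    ((1 ⊗ₖ B) * Y).submatrix (Prod.mk i) (Prod.mk j) = B * Y.submatrix (Prod.mk i) (Prod.mk j) := by
  ext p q
  simp [Matrix.mul_apply, Fintype.sum_prod_type, Matrix.one_apply]

theorem commutant_tensorSpan_subset [DecidableEq I] [DecidableEq J] {MG : Set (Matrix I I ℂ)}
    {MH : Set (Matrix J J ℂ)} (h1G : 1 ∈ MG) (h1H : 1 ∈ MH) :
    commutant (tensorSpan MG MH : Set (Matrix (I × J) (I × J) ℂ)) ⊆
      tensorSpan (commutant MG) (commutant MH) := by
  intro Y hY
  have hcomm : ∀ A ∈ MG, ∀ B ∈ MH, Y * (A ⊗ₖ B) = (A ⊗ₖ B) * Y := fun A hA B hB =>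
    hY _ (Submodule.subset_span ⟨A, hA, B, hB, rfl⟩)
  have hblocks := mem_tensorSpan_of_submatrix_mem (Y := Y)
    (V := (Subalgebra.centralizer ℂ MG).toSubmodule)
    (W := (Subalgebra.centralizer ℂ MH).toSubmodule)
    (fun b d => (Subalgebra.mem_centralizer_iff ℂ).2 fun A hA => by
      simpa [submatrix_mul_kronecker_one, submatrix_kronecker_one_mul] using
        congrArg (·.submatrix (·, b) (·, d)) (hcomm A hA 1 h1H).symm)
    (fun i j => (Subalgebra.mem_centralizer_iff ℂ).2 fun B hB => by
      simpa [submatrix_prodMk_mul_one_kronecker, submatrix_prodMk_one_kronecker_mul] using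
        congrArg (·.submatrix (Prod.mk i) (Prod.mk j)) (hcomm 1 h1G B hB).symm)
  simpa only [Subalgebra.coe_toSubmodule, Subalgebra.coe_centralizer, ← commutant_eq_centralizer,
    SetLike.mem_coe] using hblocks

theorem conjTranspose_mem_commutant {M : Set (Matrix I I ℂ)} (hM : ∀ A ∈ M, Aᴴ ∈ M)
    {Y : Matrix I I ℂ} (hY : Y ∈ commutant M) : Yᴴ ∈ commutant M := by
  rw [commutant_eq_centralizer] at hY ⊢
  exact Set.star_mem_centralizer' hM hY

theorem mul_mul_mem_commutant {M : Set (Matrix I I ℂ)} {A X B : Matrix I I ℂ}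
    (hA : A ∈ commutant M) (hX : X ∈ commutant M) (hB : B ∈ commutant M) :
    A * X * B ∈ commutant M := by
  rw [commutant_eq_centralizer] at *
  exact Set.mul_mem_centralizer (Set.mul_mem_centralizer hA hX) hB

def IsSelfAdjointBimodule (V C : Set (Matrix I I ℂ)) : Prop :=
  (∀ X ∈ V, Xᴴ ∈ V) ∧ ∀ A ∈ C, ∀ B ∈ C, ∀ X ∈ V, A * X * B ∈ V

theorem IsQuantumGraph.isSelfAdjointBimodule {S : Submodule ℂ (Matrix I I ℂ)}
    {M : Set (Matrix I I ℂ)} (h : IsQuantumGraph S M) :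
    IsSelfAdjointBimodule (S : Set (Matrix I I ℂ)) (commutant M) :=
  ⟨h.1, h.2.1⟩

theorem isSelfAdjointBimodule_commutant {M : Set (Matrix I I ℂ)} (hM : ∀ A ∈ M, Aᴴ ∈ M) :
    IsSelfAdjointBimodule (commutant M) (commutant M) :=
  ⟨fun _ => conjTranspose_mem_commutant hM, fun _ hA _ hB _ hX => mul_mul_mem_commutant hA hX hB⟩

theorem IsSelfAdjointBimodule.tensorSpan {V CG : Set (Matrix I I ℂ)} {W CH : Set (Matrix J J ℂ)}
    (hV : IsSelfAdjointBimodule V CG) (hW : IsSelfAdjointBimodule W CH) :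
    IsSelfAdjointBimodule (tensorSpan V W : Set (Matrix (I × J) (I × J) ℂ)) (tensorSpan CG CH) := by
  classical
  refine ⟨fun X hX => ?_, fun A hA B hB X hX => ?_⟩
  · induction hX using Submodule.span_induction with
    | mem x hx =>
      obtain ⟨v, hv, w, hw, rfl⟩ := hx
      rw [conjTranspose_kronecker]
      exact Submodule.subset_span ⟨_, hV.1 v hv, _, hW.1 w hw, rfl⟩
    | zero => simp
    | add x y _ _ hx hy => rw [conjTranspose_add]; exact add_mem hx hy
    | smul c x _ hx => rw [conjTranspose_smul]; exact Submodule.smul_mem _ _ hx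
  · have hmul : _root_.tensorSpan CG CH * _root_.tensorSpan V W * _root_.tensorSpan CG CH ≤
        _root_.tensorSpan V W := by
      rw [_root_.tensorSpan, _root_.tensorSpan, Submodule.span_mul_span, Submodule.span_mul_span,
        Submodule.span_le]
      rintro _ ⟨_, ⟨_, ⟨a, ha, a', ha', rfl⟩, _, ⟨v, hv, w, hw, rfl⟩, rfl⟩, _,
        ⟨b, hb, b', hb', rfl⟩, rfl⟩
      dsimp only
      rw [← mul_kronecker_mul, ← mul_kronecker_mul]
      exact Submodule.subset_span ⟨_, hV.2 a ha b hb v hv, _, hW.2 a' ha' b' hb' w hw, rfl⟩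
    exact hmul (Submodule.mul_mem_mul (Submodule.mul_mem_mul hA hX) hB)

theorem trace_mul_conjTranspose_eq_zero_of_mem_tensorSpan {V CG : Set (Matrix I I ℂ)}
    {W CH : Set (Matrix J J ℂ)}
    (horth : (∀ X ∈ V, ∀ A ∈ CG, trace (X * Aᴴ) = 0) ∨ ∀ Y ∈ W, ∀ B ∈ CH, trace (Y * Bᴴ) = 0)
    {X A : Matrix (I × J) (I × J) ℂ} (hX : X ∈ tensorSpan V W) (hA : A ∈ tensorSpan CG CH) :
    trace (X * Aᴴ) = 0 := by
  induction hX using Submodule.span_induction with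
  | mem x hx =>
    obtain ⟨v, hv, w, hw, rfl⟩ := hx
    induction hA using Submodule.span_induction with
    | mem a ha =>
      obtain ⟨a, ha, b, hb, rfl⟩ := ha
      rw [conjTranspose_kronecker, ← mul_kronecker_mul, trace_kronecker]
      rcases horth with h | h
      · rw [h v hv a ha, zero_mul]
      · rw [h w hw b hb, mul_zero]
    | zero => simp
    | add x y _ _ hx hy => rw [conjTranspose_add, mul_add, trace_add, hx, hy, add_zero]
    | smul c x _ hx => rw [conjTranspose_smul, mul_smul_comm, trace_smul, hx, smul_zero]
  | zero => simp
  | add x y _ _ hx hy => rw [add_mul, trace_add, hx, hy, add_zero]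
  | smul c x _ hx => rw [smul_mul_assoc, trace_smul, hx, smul_zero]

theorem IsQuantumGraph.sup {S₁ S₂ : Submodule ℂ (Matrix I I ℂ)} {M : Set (Matrix I I ℂ)}
    (h₁ : IsQuantumGraph S₁ M) (h₂ : IsQuantumGraph S₂ M) : IsQuantumGraph (S₁ ⊔ S₂) M := by
  refine ⟨fun X hX => ?_, fun A hA B hB X hX => ?_, fun X hX A hA => ?_⟩ <;>
    obtain ⟨x, hx, y, hy, rfl⟩ := Submodule.mem_sup.1 hX
  · rw [conjTranspose_add]
    exact Submodule.add_mem_sup (h₁.1 x hx) (h₂.1 y hy)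
  · rw [mul_add, add_mul]
    exact Submodule.add_mem_sup (h₁.2.1 A hA B hB x hx) (h₂.2.1 A hA B hB y hy)
  · rw [add_mul, trace_add, h₁.2.2 x hx A hA, h₂.2.2 y hy A hA, add_zero]

theorem isQuantumGraph_tensorSpan [DecidableEq I] [DecidableEq J] {MG V : Set (Matrix I I ℂ)}
    {MH W : Set (Matrix J J ℂ)} (h1G : 1 ∈ MG) (h1H : 1 ∈ MH)
    (hV : IsSelfAdjointBimodule V (commutant MG)) (hW : IsSelfAdjointBimodule W (commutant MH))
    (horth : (∀ X ∈ V, ∀ A ∈ commutant MG, trace (X * Aᴴ) = 0) ∨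
      ∀ Y ∈ W, ∀ B ∈ commutant MH, trace (Y * Bᴴ) = 0) :
    IsQuantumGraph (tensorSpan V W) (tensorSpan MG MH : Set (Matrix (I × J) (I × J) ℂ)) := by
  have hcomm := commutant_tensorSpan_subset h1G h1H
  obtain ⟨hstar, hbimod⟩ := hV.tensorSpan hW
  exact ⟨hstar, fun A hA B hB => hbimod A (hcomm hA) B (hcomm hB),
    fun X hX A hA => trace_mul_conjTranspose_eq_zero_of_mem_tensorSpan horth hX (hcomm hA)⟩

end

theorem strongProduct_isQuantumGraph {n m : ℕ}
    (SG : Submodule ℂ (Matrix (Fin n) (Fin n) ℂ))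
    (MG : StarSubalgebra ℂ (Matrix (Fin n) (Fin n) ℂ))
    (SH : Submodule ℂ (Matrix (Fin m) (Fin m) ℂ))
    (MH : StarSubalgebra ℂ (Matrix (Fin m) (Fin m) ℂ))
    (hG : IsQuantumGraph SG (MG : Set (Matrix (Fin n) (Fin n) ℂ)))
    (hH : IsQuantumGraph SH (MH : Set (Matrix (Fin m) (Fin m) ℂ))) :
    IsQuantumGraph (tensorSpan (SG : Set (Matrix (Fin n) (Fin n) ℂ)) (commutant (MH : Set (Matrix (Fin m) (Fin m) ℂ))) ⊔ tensorSpan (commutant (MG : Set (Matrix (Fin n) (Fin n) ℂ))) (SH : Set (Matrix (Fin m) (Fin m) ℂ)) ⊔ tensorSpan (SG : Set (Matrix (Fin n) (Fin n) ℂ)) (SH : Set (Matrix (Fin m) (Fin m) ℂ))) ((tensorSpan (MG : Set (Matrix (Fin n) (Fin n) ℂ)) (MH : Set (Matrix (Fin m) (Fin m) ℂ)) : Submodule ℂ (Matrix (Fin n × Fin m) (Fin n × Fin m) ℂ)) : Set (Matrix (Fin n × Fin m) (Fin n × Fin m) ℂ)) := by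
  have hCG := isSelfAdjointBimodule_commutant (M := (MG : Set (Matrix (Fin n) (Fin n) ℂ)))
    fun _ hA => star_mem hA
  have hCH := isSelfAdjointBimodule_commutant (M := (MH : Set (Matrix (Fin m) (Fin m) ℂ)))
    fun _ hB => star_mem hB
  have h1G : (1 : Matrix (Fin n) (Fin n) ℂ) ∈ (MG : Set (Matrix (Fin n) (Fin n) ℂ)) := one_mem MG
  have h1H : (1 : Matrix (Fin m) (Fin m) ℂ) ∈ (MH : Set (Matrix (Fin m) (Fin m) ℂ)) := one_mem MH
  exact ((isQuantumGraph_tensorSpan h1G h1H hG.isSelfAdjointBimodule hCH (.inl hG.2.2)).sup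
    (isQuantumGraph_tensorSpan h1G h1H hCG hH.isSelfAdjointBimodule (.inr hH.2.2))).sup
    (isQuantumGraph_tensorSpan h1G h1H hG.isSelfAdjointBimodule hH.isSelfAdjointBimodule
      (.inl hG.2.2))
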